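/- Let F = GF(2^m) with q = 2^m, let α be a primitive element of F*, and choose as an F_2-basis of F the elements e_i = α^i for i = 1, …, m (assuming α^1, …, α^m are linearly independent over F_2). Let R ⊆ F have size k and let P be a polynomial over F of degree less than k with Lagrange coefficients c_u (u ∈ R). Define I : F → F by I(x) = x^{−1} for x ≠ 0, I(0) = 0; define C : F → F by C(y) = c_y for y ∈ R and 0 otherwise; and let C_i, I_j : F → {0,1} ⊆ ℤ be the coordinate functions of C and I in the basis e_1, …, e_m. Then for every x ∉ R, P(x) = Π(x) · ⊕_{s=0}^{2(m−1)} α^s · ((1/q)·Ŵ( Σ_{i+j=s, 1≤i,j≤m, relabeled so e_i e_j = α^s} ŴC_i · ŴI_j )(x) mod 2), i.e. the F_2-contribution of all pairs (i, j) with e_i·e_j = α^s can be computed as the parity of a single integer (1/q)·Ŵ(Σ_{i+j=s} ŴC_i·ŴI_j)(x), and summing these contributions weighted by α^s and multiplying by Π(x) recovers P(x). -/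

import Mathlib

/-- The Walsh transform of `f : F_2^m → ℤ`:
`Ŵf(x) = Σ_{y ∈ F_2^m} f(y) · (−1)^{x·y}` where `x·y = Σ_i x_i y_i mod 2`. -/
def walsh {m : ℕ} (f : (Fin m → ZMod 2) → ℤ) (x : Fin m → ZMod 2) : ℤ :=
  ∑ y : Fin m → ZMod 2, f y * (-1) ^ (∑ i, x i * y i : ZMod 2).val

/-!
The Walsh transform turns pointwise products into correlations:
`Ŵ(Ŵf · Ŵg)(v) = 2^m Σ_y f(y) g(v + y)`. Hence `(1/q) Ŵ(Σ_{i+j=s} ŴC_i ŴI_j)(v)` is the integer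
`Σ_{i+j=s} Σ_y C_i(y) I_j(v + y)`, and its parity is its image in `F`. Weighting by
`α^s = e_i e_j` and summing over `s` reassembles, inside `F`, the sum
`Σ_y C(y) I(x + y) = Σ_{u ∈ R} c_u / (x + u)`; the barycentric form of Lagrange interpolation,
`P(x) = Π(x) Σ_{u ∈ R} c_u / (x - u)` for `x ∉ R`, finishes the proof since `-` is `+` in
characteristic `2`.
-/

open Finset Polynomial

section Walsh

variable {m : ℕ}

lemma neg_one_pow_val_add (a b : ZMod 2) :
    (-1 : ℤ) ^ (a + b).val = (-1) ^ a.val * (-1) ^ b.val := by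
  revert a b; decide

lemma sum_neg_one_pow_dotProduct (w : Fin m → ZMod 2) :
    ∑ z : Fin m → ZMod 2, (-1 : ℤ) ^ (z ⬝ᵥ w).val = if w = 0 then 2 ^ m else 0 := by
  split_ifs with hw
  · simp [hw]
  · obtain ⟨i, hi⟩ := Function.ne_iff.mp hw
    have hwi : w i = 1 := Fin.eq_one_of_ne_zero _ hi
    have hflip : ∀ z : Fin m → ZMod 2,
        (-1 : ℤ) ^ ((z + Pi.single i 1) ⬝ᵥ w).val = -(-1) ^ (z ⬝ᵥ w).val := by
      intro z
      rw [add_dotProduct, neg_one_pow_val_add, single_dotProduct, one_mul, hwi, ZMod.val_one,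
        pow_one, mul_neg_one]
    have := Equiv.sum_comp (Equiv.addRight (Pi.single i 1 : Fin m → ZMod 2))
      fun z => (-1 : ℤ) ^ (z ⬝ᵥ w).val
    simp only [Equiv.coe_addRight, hflip, sum_neg_distrib] at this
    linarith

lemma walsh_apply (f : (Fin m → ZMod 2) → ℤ) (x : Fin m → ZMod 2) :
    walsh f x = ∑ y, f y * (-1) ^ (x ⬝ᵥ y).val :=
  rfl

lemma walsh_sum {ι : Type*} (s : Finset ι) (f : ι → (Fin m → ZMod 2) → ℤ) (x : Fin m → ZMod 2) :
    walsh (fun z => ∑ i ∈ s, f i z) x = ∑ i ∈ s, walsh (f i) x := by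
  simp only [walsh_apply, sum_mul]
  exact sum_comm

lemma walsh_walsh_mul_walsh (f g : (Fin m → ZMod 2) → ℤ) (v : Fin m → ZMod 2) :
    walsh (fun z => walsh f z * walsh g z) v = 2 ^ m * ∑ y, f y * g (v + y) := by
  have hchar : ∀ a b z : Fin m → ZMod 2, (-1 : ℤ) ^ (z ⬝ᵥ a).val * (-1) ^ (z ⬝ᵥ b).val *
      (-1) ^ (v ⬝ᵥ z).val = (-1) ^ (z ⬝ᵥ (a + b + v)).val := by
    intro a b z
    rw [dotProduct_add, dotProduct_add, neg_one_pow_val_add, neg_one_pow_val_add,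
      dotProduct_comm v]
  have hcancel : ∀ a b : Fin m → ZMod 2, a + b + v = 0 ↔ v + a = b := by
    intro a b
    rw [add_right_comm, add_eq_zero_iff_eq_neg, ZModModule.neg_eq_self, add_comm v, eq_comm]
  calc walsh (fun z => walsh f z * walsh g z) v
      = ∑ b, ∑ a, f a * g b * ∑ z, (-1 : ℤ) ^ (z ⬝ᵥ (a + b + v)).val := by
        simp only [walsh_apply, sum_mul, mul_sum, ← hchar]
        rw [sum_comm]
        refine sum_congr rfl fun b _ => ?_
        rw [sum_comm]
        exact sum_congr rfl fun a _ => sum_congr rfl fun z _ => by ring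
    _ = 2 ^ m * ∑ y, f y * g (v + y) := by
        rw [sum_comm]
        simp only [sum_neg_one_pow_dotProduct, hcancel, mul_ite, mul_zero, sum_ite_eq, mem_univ,
          if_true, mul_sum]
        exact sum_congr rfl fun a _ => by ring

lemma walsh_sum_ite_walsh_mul_div {ι κ : Type*} (p : ι → κ → Prop) [∀ i j, Decidable (p i j)]
    (s : Finset ι) (t : Finset κ) (f : ι → (Fin m → ZMod 2) → ℤ) (g : κ → (Fin m → ZMod 2) → ℤ)
    (v : Fin m → ZMod 2) :
    walsh (fun z => ∑ i ∈ s, ∑ j ∈ t, if p i j then walsh (f i) z * walsh (g j) z else 0) v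
        / 2 ^ m =
      ∑ i ∈ s, ∑ j ∈ t, if p i j then ∑ y, f i y * g j (v + y) else 0 := by
  simp only [← sum_filter, walsh_sum]
  simp only [walsh_walsh_mul_walsh, ← mul_sum]
  exact Int.mul_ediv_cancel_left _ (by positivity)

end Walsh

lemma intCast_emod_two {R : Type*} [AddGroupWithOne R] [CharP R 2] (n : ℤ) :
    ((n % 2 : ℤ) : R) = n :=
  (CharP.intCast_eq_intCast_mod R 2).symm

lemma sum_Icc_pow_mul_sum_sum_ite {R : Type*} [CommSemiring R] {m : ℕ} (α : R)
    (a : Fin m → Fin m → R) :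
    ∑ s ∈ Icc 2 (2 * m),
        α ^ s * ∑ i : Fin m, ∑ j : Fin m, (if (i : ℕ) + 1 + ((j : ℕ) + 1) = s then a i j else 0) =
      ∑ i : Fin m, ∑ j : Fin m, α ^ ((i : ℕ) + 1) * α ^ ((j : ℕ) + 1) * a i j := by
  simp only [mul_sum, mul_ite, mul_zero]
  rw [sum_comm]
  refine sum_congr rfl fun i _ => ?_
  rw [sum_comm]
  refine sum_congr rfl fun j _ => ?_
  rw [sum_ite_eq, if_pos (mem_Icc.mpr (by omega)), pow_add]

lemma Function.Bijective.sum_comp_eq_sum_of_eq_zero {β γ M : Type*} [Fintype β]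
    [AddCommMonoid M] {φ : β → γ} (hφ : φ.Bijective) (R : Finset γ) (g : γ → M)
    (hg : ∀ u ∉ R, g u = 0) : ∑ y, g (φ y) = ∑ u ∈ R, g u := by
  rw [← sum_preimage φ R hφ.injective.injOn g fun u _ hu => absurd (hφ.surjective u) hu]
  refine (sum_subset (subset_univ _) fun y _ hy => hg _ ?_).symm
  simpa using hy

lemma eval_eq_prod_sub_mul_sum {F : Type*} [Field F] [DecidableEq F] {R : Finset F} {P : F[X]}
    (hdeg : P.degree < #R) {x : F} (hx : x ∉ R) :
    P.eval x =
      (∏ y ∈ R, (x - y)) * ∑ u ∈ R, P.eval u / (∏ y ∈ R.erase u, (u - y)) * (x - u)⁻¹ := by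
  conv_lhs => rw [Lagrange.eq_interpolate (Set.injOn_id _) hdeg]
  rw [Lagrange.eval_interpolate_not_at_node _ fun u hu h => hx (by rwa [h]), Lagrange.eval_nodal]
  simp only [Lagrange.nodalWeight, id, prod_inv_distrib, div_eq_mul_inv]
  congr 1
  exact sum_congr rfl fun u _ => by ring

theorem lagrange_evaluation_via_walsh_general
    {m k : ℕ} (F : Type) [Field F] [DecidableEq F] [CharP F 2]
    (α : F)
    (φ : (Fin m → ZMod 2) → F)
    (hφdef : ∀ v : Fin m → ZMod 2,
      φ v = ∑ i : Fin m, (ZMod.cast (v i) : F) * α ^ ((i : ℕ) + 1))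
    (hφ : Function.Bijective φ)
    (R : Finset F) (hR : R.card = k)
    (P : Polynomial F) (hdeg : P.degree < (k : ℕ))
    (c : F → F) (hc : ∀ u ∈ R, c u = P.eval u / ∏ y ∈ R.erase u, (u + y))
    (C I : F → F)
    (hC : ∀ y : F, C y = if y ∈ R then c y else 0)
    (hI : ∀ x : F, x ≠ 0 → I x = x⁻¹)
    (Ci Ij : Fin m → (Fin m → ZMod 2) → ℤ)
    (hCi : ∀ v : Fin m → ZMod 2,
      C (φ v) = ∑ i : Fin m, ((Ci i v : ℤ) : F) * α ^ ((i : ℕ) + 1))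
    (hIj : ∀ v : Fin m → ZMod 2,
      I (φ v) = ∑ j : Fin m, ((Ij j v : ℤ) : F) * α ^ ((j : ℕ) + 1)) :
    ∀ v : Fin m → ZMod 2, φ v ∉ R →
      P.eval (φ v) =
        (∏ y ∈ R.erase (φ v), (φ v + y)) *
          ∑ s ∈ Finset.Icc 2 (2 * m), α ^ s *
            (((walsh (fun z => ∑ i : Fin m, ∑ j : Fin m,
                if (i : ℕ) + 1 + ((j : ℕ) + 1) = s
                then walsh (Ci i) z * walsh (Ij j) z else 0) v / 2 ^ m) % 2 : ℤ) : F) := by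
  intro v hv
  have hφadd (a b : Fin m → ZMod 2) : φ (a + b) = φ a + φ b := by
    simp only [hφdef, Pi.add_apply, ZMod.cast_add', add_mul, sum_add_distrib]
  have hcoord : ∑ i : Fin m, ∑ j : Fin m, α ^ ((i : ℕ) + 1) * α ^ ((j : ℕ) + 1) *
      ∑ y, ((Ci i y : ℤ) : F) * ((Ij j (v + y) : ℤ) : F) = ∑ y, C (φ y) * I (φ (v + y)) := by
    simp only [hCi, hIj, sum_mul_sum]
    simp only [mul_sum]
    conv_rhs => rw [sum_comm]
    refine sum_congr rfl fun i _ => ?_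
    rw [sum_comm]
    exact sum_congr rfl fun y _ => sum_congr rfl fun j _ => by ring
  have hfrac : ∑ y, C (φ y) * I (φ (v + y)) = ∑ u ∈ R, c u * (φ v + u)⁻¹ := by
    simp only [hφadd]
    rw [hφ.sum_comp_eq_sum_of_eq_zero R (fun u => C u * I (φ v + u))
      fun u hu => by rw [hC, if_neg hu, zero_mul]]
    refine sum_congr rfl fun u hu => ?_
    rw [hC, if_pos hu, hI _ fun h => hv (by rwa [CharTwo.add_eq_zero.mp h])]
  simp only [walsh_sum_ite_walsh_mul_div, intCast_emod_two]
  push_cast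
  rw [sum_Icc_pow_mul_sum_sum_ite, hcoord, hfrac, erase_eq_of_notMem hv,
    eval_eq_prod_sub_mul_sum (hR ▸ hdeg) hv]
  simp only [CharTwo.sub_eq_add]
  congr 1
  exact sum_congr rfl fun u hu => by rw [hc u hu]

/-- Choose the `F_2`-basis `e_i = α^i` (`i = 1, …, m`) of
`F = GF(2^m)` given by a primitive element `α`; this identifies `F` with `F_2^m`
via the bijection `φ(v) = Σ_i v_i α^i`.  Let `P` have degree `< k = |R|`, Lagrange
coefficients `c_u`, coefficient function `C` (equal to `c` on `R`, `0` elsewhere)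
and inversion `I` (with `I(0) = 0`), with `{0,1}`-valued coordinate functions
`C_i, I_j` in this basis.  Grouping the pairs `(i, j)` by the value
`e_i·e_j = α^s` (so `s` ranges over the `2(m−1)+1` values `2, …, 2m`), for every
`x = φ(v) ∉ R`:
`P(x) = Π(x) · ⊕_s α^s · parity((1/q)·Ŵ(Σ_{(i+1)+(j+1)=s} ŴC_i·ŴI_j)(v))`,
where `q = 2^m` and `Π(x) = ∏_{y ∈ R, y ≠ x} (x + y)`. -/
theorem lagrange_evaluation_via_walsh
    {m k : ℕ} (hm : 1 ≤ m) (F : Type) [Field F] [Fintype F] [DecidableEq F] [CharP F 2]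
    (hcard : Fintype.card F = 2 ^ m)
    (α : F) (hord : orderOf α = 2 ^ m - 1)
    (φ : (Fin m → ZMod 2) → F)
    (hφdef : ∀ v : Fin m → ZMod 2,
      φ v = ∑ i : Fin m, (ZMod.cast (v i) : F) * α ^ ((i : ℕ) + 1))
    (hφ : Function.Bijective φ)
    (R : Finset F) (hR : R.card = k)
    (P : Polynomial F) (hdeg : P.degree < (k : ℕ))
    (c : F → F) (hc : ∀ u ∈ R, c u = P.eval u / ∏ y ∈ R.erase u, (u + y))
    (C I : F → F)
    (hC : ∀ y : F, C y = if y ∈ R then c y else 0)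
    (hI0 : I 0 = 0) (hI : ∀ x : F, x ≠ 0 → I x = x⁻¹)
    (Ci Ij : Fin m → (Fin m → ZMod 2) → ℤ)
    (hCi01 : ∀ i v, Ci i v = 0 ∨ Ci i v = 1)
    (hIj01 : ∀ j v, Ij j v = 0 ∨ Ij j v = 1)
    (hCi : ∀ v : Fin m → ZMod 2,
      C (φ v) = ∑ i : Fin m, ((Ci i v : ℤ) : F) * α ^ ((i : ℕ) + 1))
    (hIj : ∀ v : Fin m → ZMod 2,
      I (φ v) = ∑ j : Fin m, ((Ij j v : ℤ) : F) * α ^ ((j : ℕ) + 1)) :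
    ∀ v : Fin m → ZMod 2, φ v ∉ R →
      P.eval (φ v) =
        (∏ y ∈ R.erase (φ v), (φ v + y)) *
          ∑ s ∈ Finset.Icc 2 (2 * m), α ^ s *
            (((walsh (fun z => ∑ i : Fin m, ∑ j : Fin m,
                if (i : ℕ) + 1 + ((j : ℕ) + 1) = s
                then walsh (Ci i) z * walsh (Ij j) z else 0) v / 2 ^ m) % 2 : ℤ) : F) :=
  lagrange_evaluation_via_walsh_general F α φ hφdef hφ R hR P hdeg c hc C I hC hI Ci Ij hCi hIj
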